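/- Let p be a prime and k, ℓ ≥ 1 integers. Then h_p(k) + h_p(ℓ) ≤ h_p(k + ℓ). -/

import Mathlib

/-- The sumset `Σ(S)` of a multiset `S` with elements in an abelian group:
the set of all sums of submultisets of `S` (the empty sum being `0`). -/
def sumset {A : Type*} [AddCommGroup A] [DecidableEq A] (S : Multiset A) : Finset A :=
  (S.powerset.map Multiset.sum).toFinset

/-- A multiset `S` is reduced if removing one copy of any of its elements strictly
decreases the size of its sumset. -/
def IsReducedMultiset {A : Type*} [AddCommGroup A] [DecidableEq A] (S : Multiset A) : Prop :=
  ∀ s ∈ S, (sumset (S - {s})).card < (sumset S).card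

/-- `h_p(k)`: the largest size of a reduced multiset with elements in `ℤ_p^k`. -/
noncomputable def hmax (p k : ℕ) : ℕ :=
  sSup {n : ℕ | ∃ S : Multiset (Fin k → ZMod p), IsReducedMultiset S ∧ Multiset.card S = n}

/-!
Place a maximal reduced multiset `S` of `ℤ_p^k` and one `T` of `ℤ_p^ℓ` side by side in
`ℤ_p^k × ℤ_p^ℓ ≅ ℤ_p^(k+ℓ)`. The sumset of the union is `Σ(S) × Σ(T)`, so removing an element of
either part shrinks one factor, hence the product: the union is reduced, of size `h_p(k) + h_p(ℓ)`.

That `h_p(k)` is attained rests on `|S| < |Σ(S)| ≤ p^k` for reduced `S`, proved by induction since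
submultisets of reduced multisets are reduced: if `{0, a} + Σ(T) = Σ(T)` and `T ≤ U`, then
`{0, a} + Σ(U) = {0, a} + Σ(T) + Σ(U - T) = Σ(U)`.
-/

open Pointwise

section Sumset

variable {A B : Type*} [AddCommGroup A] [DecidableEq A] [AddCommGroup B] [DecidableEq B]

@[simp]
lemma sumset_zero : sumset (0 : Multiset A) = 0 := by
  simp [sumset, ← Finset.singleton_zero]

lemma sumset_cons (a : A) (S : Multiset A) : sumset (a ::ₘ S) = {0, a} + sumset S := by
  ext x
  simp [sumset, Multiset.powerset_cons, Finset.mem_add, or_and_right, exists_or, eq_comm]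

lemma sumset_add (S T : Multiset A) : sumset (S + T) = sumset S + sumset T := by
  induction S using Multiset.induction_on with
  | empty => simp
  | cons a S ih => rw [Multiset.cons_add, sumset_cons, sumset_cons, ih, add_assoc]

lemma zero_mem_sumset (S : Multiset A) : (0 : A) ∈ sumset S := by
  simpa [sumset] using ⟨0, Multiset.zero_le S, Multiset.sum_zero⟩

lemma sumset_mono {S T : Multiset A} (h : S ≤ T) : sumset S ⊆ sumset T := by
  obtain ⟨U, rfl⟩ := Multiset.le_iff_exists_add.1 h
  rw [sumset_add]
  exact Finset.subset_add_left _ (zero_mem_sumset U)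

lemma sumset_map (f : A →+ B) (S : Multiset A) : sumset (S.map f) = (sumset S).image f := by
  induction S using Multiset.induction_on with
  | empty => simp [← Finset.singleton_zero]
  | cons a S ih => simp [sumset_cons, ih, Finset.image_add]

lemma sumset_cons_eq_of_le {a : A} {T U : Multiset A} (h : sumset (a ::ₘ T) = sumset T)
    (hTU : T ≤ U) : sumset (a ::ₘ U) = sumset U := by
  obtain ⟨V, rfl⟩ := Multiset.le_iff_exists_add.1 hTU
  rw [← Multiset.cons_add, sumset_add, h, sumset_add]

lemma IsReducedMultiset.of_le {S T : Multiset A} (hT : IsReducedMultiset T) (hST : S ≤ T) :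
    IsReducedMultiset S := by
  intro s hs
  rw [Multiset.sub_singleton]
  by_contra hcard
  have hsT : s ∈ T := Multiset.mem_of_le hST hs
  have hS : sumset (s ::ₘ S.erase s) = sumset (S.erase s) := by
    rw [Multiset.cons_erase hs]
    exact (Finset.eq_of_subset_of_card_le (sumset_mono (Multiset.erase_le s S))
      (not_lt.1 hcard)).symm
  have hT' := sumset_cons_eq_of_le hS (Multiset.erase_le_erase s hST)
  rw [Multiset.cons_erase hsT] at hT'
  simpa [Multiset.sub_singleton, hT'] using hT s hsT

lemma IsReducedMultiset.card_lt_card_sumset {S : Multiset A} (hS : IsReducedMultiset S) :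
    Multiset.card S < (sumset S).card := by
  induction S using Multiset.induction_on with
  | empty => simp
  | cons a S ih =>
    have ha := hS a (Multiset.mem_cons_self a S)
    rw [Multiset.sub_singleton, Multiset.erase_cons_head] at ha
    rw [Multiset.card_cons]
    exact (Nat.succ_le_of_lt (ih (hS.of_le (Multiset.le_cons_self S a)))).trans_lt ha

lemma IsReducedMultiset.map_of_injective {S : Multiset A} (hS : IsReducedMultiset S)
    (f : A →+ B) (hf : Function.Injective f) : IsReducedMultiset (S.map f) := by
  intro b hb
  obtain ⟨s, hs, rfl⟩ := Multiset.mem_map.1 hb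
  rw [Multiset.sub_singleton, ← Multiset.map_erase _ hf, sumset_map, sumset_map,
    Finset.card_image_of_injective _ hf, Finset.card_image_of_injective _ hf]
  simpa [Multiset.sub_singleton] using hS s hs

lemma sumset_map_inl_add_map_inr (S : Multiset A) (T : Multiset B) :
    sumset (S.map (AddMonoidHom.inl A B) + T.map (AddMonoidHom.inr A B)) =
      sumset S ×ˢ sumset T := by
  rw [sumset_add, sumset_map, sumset_map]
  ext ⟨a, b⟩
  simp [Finset.mem_add]

lemma IsReducedMultiset.map_inl_add_map_inr {S : Multiset A} {T : Multiset B}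
    (hS : IsReducedMultiset S) (hT : IsReducedMultiset T) :
    IsReducedMultiset (S.map (AddMonoidHom.inl A B) + T.map (AddMonoidHom.inr A B)) := by
  intro u hu
  have hSpos : 0 < (sumset S).card := Finset.card_pos.2 ⟨0, zero_mem_sumset S⟩
  have hTpos : 0 < (sumset T).card := Finset.card_pos.2 ⟨0, zero_mem_sumset T⟩
  rw [Multiset.sub_singleton, sumset_map_inl_add_map_inr, Finset.card_product]
  rcases Multiset.mem_add.1 hu with hu | hu
  · obtain ⟨s, hs, rfl⟩ := Multiset.mem_map.1 hu
    rw [Multiset.erase_add_left_pos _ hu,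
      ← Multiset.map_erase (AddMonoidHom.inl A B) (Prod.mk_left_injective 0),
      sumset_map_inl_add_map_inr, Finset.card_product]
    have hs := hS s hs
    rw [Multiset.sub_singleton] at hs
    exact Nat.mul_lt_mul_of_pos_right hs hTpos
  · obtain ⟨t, ht, rfl⟩ := Multiset.mem_map.1 hu
    rw [Multiset.erase_add_right_pos _ hu,
      ← Multiset.map_erase (AddMonoidHom.inr A B) (Prod.mk_right_injective 0),
      sumset_map_inl_add_map_inr, Finset.card_product]
    have ht := hT t ht
    rw [Multiset.sub_singleton] at ht
    exact Nat.mul_lt_mul_of_pos_left ht hSpos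

lemma bddAbove_card_isReducedMultiset [Fintype A] :
    BddAbove {n : ℕ | ∃ S : Multiset A, IsReducedMultiset S ∧ Multiset.card S = n} := by
  refine ⟨Fintype.card A, ?_⟩
  rintro _ ⟨S, hS, rfl⟩
  exact (hS.card_lt_card_sumset.trans_le (Finset.card_le_univ _)).le

end Sumset

section hmax

variable (p : ℕ) [NeZero p]

lemma card_le_hmax {k : ℕ} {S : Multiset (Fin k → ZMod p)} (hS : IsReducedMultiset S) :
    Multiset.card S ≤ hmax p k :=
  le_csSup bddAbove_card_isReducedMultiset ⟨S, hS, rfl⟩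

lemma exists_isReducedMultiset_card_eq_hmax (k : ℕ) :
    ∃ S : Multiset (Fin k → ZMod p), IsReducedMultiset S ∧ Multiset.card S = hmax p k := by
  refine Nat.sSup_mem ?_ bddAbove_card_isReducedMultiset
  exact ⟨0, 0, fun _ hs => absurd hs (Multiset.notMem_zero _), rfl⟩

end hmax

def Fin.appendAddEquiv (M : Type*) [AddCommMonoid M] (m n : ℕ) :
    ((Fin m → M) × (Fin n → M)) ≃+ (Fin (m + n) → M) :=
  { Fin.appendEquiv m n with
    map_add' x y := by
      funext i
      refine Fin.addCases (fun j => ?_) (fun j => ?_) i <;> simp }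

theorem hmax_add_hmax_le_general (p k l : ℕ) (hp : p.Prime) :
    hmax p k + hmax p l ≤ hmax p (k + l) := by
  have : NeZero p := ⟨hp.ne_zero⟩
  obtain ⟨S, hS, hScard⟩ := exists_isReducedMultiset_card_eq_hmax p k
  obtain ⟨T, hT, hTcard⟩ := exists_isReducedMultiset_card_eq_hmax p l
  let e := Fin.appendAddEquiv (ZMod p) k l
  have hU := (hS.map_inl_add_map_inr hT).map_of_injective e.toAddMonoidHom e.injective
  calc hmax p k + hmax p l
      = Multiset.card ((S.map (AddMonoidHom.inl _ _) + T.map (AddMonoidHom.inr _ _)).map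
          e.toAddMonoidHom) := by simp [hScard, hTcard]
    _ ≤ hmax p (k + l) := card_le_hmax p hU

/-- `h_p(k) + h_p(ℓ) ≤ h_p(k + ℓ)`. -/
theorem hmax_add_hmax_le (p k l : ℕ) (hp : p.Prime) (hk : 1 ≤ k) (hl : 1 ≤ l) :
    hmax p k + hmax p l ≤ hmax p (k + l) :=
  hmax_add_hmax_le_general p k l hp
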